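/- Assume the discounted algebraic Riccati equation setup with block upper-triangular transition matrix Ã and stacked input matrix B̃, let P = fromBlocks(P_yy, P_yz, P_yzᵀ, P_zz) be symmetric, and assume R_uu + β B_yuᵀ P_yy B_yu is invertible. Define F_y = −(R_uu + β B_yuᵀ P_yy B_yu)⁻¹ β B_yuᵀ P_yy A_yy. Then P satisfies the discounted algebraic Riccati equation if and only if the following three block equations hold simultaneously: (i) P_yy = Q_yy + β A_yyᵀ P_yy A_yy − β² A_yyᵀ P_yy B_yu (R_uu + β B_yuᵀ P_yy B_yu)⁻¹ B_yuᵀ P_yy A_yy; (ii) P_yz = Q_yz + β (A_yy + B_yu F_y)ᵀ P_yy A_yz + β (A_yy + B_yu F_y)ᵀ P_yz A_zz; (iii) P_zz = Q_zz + β [A_yzᵀ (P_yy A_yz + P_yz A_zz) + A_zzᵀ (P_yzᵀ A_yz + P_zz A_zz)] − β² (A_yzᵀ P_yy B_yu + A_zzᵀ P_yzᵀ B_yu) (R_uu + β B_yuᵀ P_yy B_yu)⁻¹ B_yuᵀ (P_yy A_yz + P_yz A_zz). -/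

import Mathlib

/-!
Since `Ã` is block upper triangular and `B̃` vanishes on the `z`-rows, `B̃ᵀ P B̃ = B_yuᵀ P_yy B_yu`
and all products in the Riccati operator can be computed blockwise. Its `yy` block is the Riccati
operator of the subsystem `(A_yy, B_yu)`; its `yz` block, after expanding the closed-loop matrix
`(A_yy + B_yu F_y)ᵀ = A_yyᵀ - β A_yyᵀ P_yy B_yu (R_uu + β B_yuᵀ P_yy B_yu)⁻¹ B_yuᵀ`, is the
Sylvester equation (ii); its `zz` block is (iii). The `zy` block adds nothing: the Riccati
operator of symmetric data is symmetric, as is `P`, so that equation is the transpose of (ii).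
-/

open Matrix

namespace Matrix

theorem fromBlocks_eq_fromBlocks_iff_of_isSymm {α l m : Type*} {A A' : Matrix l l α}
    {B B' : Matrix l m α} {C C' : Matrix m l α} {D D' : Matrix m m α}
    (h : (fromBlocks A B C D).IsSymm) (h' : (fromBlocks A' B' C' D').IsSymm) :
    fromBlocks A B C D = fromBlocks A' B' C' D' ↔ A = A' ∧ B = B' ∧ D = D' := by
  rw [fromBlocks_inj, ← (isSymm_fromBlocks_iff.mp h).2.1, ← (isSymm_fromBlocks_iff.mp h').2.1]
  constructor
  · rintro ⟨hA, hB, -, hD⟩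
    exact ⟨hA, hB, hD⟩
  · rintro ⟨hA, hB, hD⟩
    exact ⟨hA, hB, congrArg transpose hB, hD⟩

variable {α : Type*} [CommRing α] {l m n : Type*}

noncomputable def riccatiOperator [Fintype m] [DecidableEq m] [Fintype n]
    (Q A : Matrix n n α) (B : Matrix n m α) (R : Matrix m m α) (β : α)
    (P : Matrix n n α) : Matrix n n α :=
  Q + β • (Aᵀ * P * A) - β ^ 2 • (Aᵀ * P * B * (R + β • (Bᵀ * P * B))⁻¹ * (Bᵀ * P * A))

theorem IsSymm.transpose_mul_mul [Fintype n] {P : Matrix n n α} (hP : P.IsSymm)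
    (A : Matrix n l α) : (Aᵀ * P * A).IsSymm := by
  simp only [IsSymm, transpose_mul, transpose_transpose, hP.eq, Matrix.mul_assoc]

theorem IsSymm.riccatiOperator [Fintype m] [DecidableEq m] [Fintype n] {Q P : Matrix n n α}
    {R : Matrix m m α} (hQ : Q.IsSymm) (hP : P.IsSymm) (hR : R.IsSymm) (A : Matrix n n α)
    (B : Matrix n m α) (β : α) : (riccatiOperator Q A B R β P).IsSymm := by
  have hG : (R + β • (Bᵀ * P * B)).IsSymm := hR.add ((hP.transpose_mul_mul B).smul β)
  have hK : Aᵀ * P * B = (Bᵀ * P * A)ᵀ := by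
    simp only [transpose_mul, transpose_transpose, hP.eq, Matrix.mul_assoc]
  rw [Matrix.riccatiOperator, hK]
  exact (hQ.add ((hP.transpose_mul_mul A).smul β)).sub ((hG.inv.transpose_mul_mul _).smul _)

section BlockTriangular

/- The ascriptions `(fromRows B 0 : Matrix (l ⊕ n) m α)` are needed: without them the outer
product elaborates through `CStarMatrix`'s `HMul` instance and the block lemmas do not rewrite. -/
variable [Fintype l] [Fintype n]
  (A₁₁ : Matrix l l α) (A₁₂ : Matrix l n α) (A₂₂ : Matrix n n α) (B : Matrix l m α)
  (P₁₁ : Matrix l l α) (P₁₂ : Matrix l n α) (P₂₁ : Matrix n l α) (P₂₂ : Matrix n n α)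

theorem fromBlocks_transpose_mul_fromBlocks_mul_fromBlocks :
    (fromBlocks A₁₁ A₁₂ 0 A₂₂)ᵀ * fromBlocks P₁₁ P₁₂ P₂₁ P₂₂ * fromBlocks A₁₁ A₁₂ 0 A₂₂ =
      fromBlocks (A₁₁ᵀ * P₁₁ * A₁₁) (A₁₁ᵀ * (P₁₁ * A₁₂ + P₁₂ * A₂₂))
        ((A₁₂ᵀ * P₁₁ + A₂₂ᵀ * P₂₁) * A₁₁)
        (A₁₂ᵀ * (P₁₁ * A₁₂ + P₁₂ * A₂₂) + A₂₂ᵀ * (P₂₁ * A₁₂ + P₂₂ * A₂₂)) := by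
  rw [Matrix.mul_assoc]
  simp only [fromBlocks_transpose, transpose_zero, fromBlocks_multiply, Matrix.zero_mul,
    Matrix.mul_zero, add_zero, Matrix.add_mul, Matrix.mul_assoc]

theorem fromRows_transpose_mul_fromBlocks_mul_fromRows :
    (fromRows B 0 : Matrix (l ⊕ n) m α)ᵀ * fromBlocks P₁₁ P₁₂ P₂₁ P₂₂ *
        (fromRows B 0 : Matrix (l ⊕ n) m α) = Bᵀ * P₁₁ * B := by
  simp only [transpose_fromRows, transpose_zero, fromCols_mul_fromBlocks,
    fromCols_mul_fromRows, Matrix.zero_mul, Matrix.mul_zero, add_zero]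

theorem fromRows_transpose_mul_fromBlocks_mul_fromBlocks :
    (fromRows B 0 : Matrix (l ⊕ n) m α)ᵀ * fromBlocks P₁₁ P₁₂ P₂₁ P₂₂ *
        fromBlocks A₁₁ A₁₂ 0 A₂₂ =
      fromCols (Bᵀ * P₁₁ * A₁₁) (Bᵀ * (P₁₁ * A₁₂ + P₁₂ * A₂₂)) := by
  rw [Matrix.mul_assoc]
  simp only [transpose_fromRows, transpose_zero, fromBlocks_multiply, fromCols_mul_fromBlocks,
    Matrix.zero_mul, Matrix.mul_zero, add_zero, Matrix.mul_assoc]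

theorem fromBlocks_transpose_mul_fromBlocks_mul_fromRows :
    (fromBlocks A₁₁ A₁₂ 0 A₂₂)ᵀ * fromBlocks P₁₁ P₁₂ P₂₁ P₂₂ *
        (fromRows B 0 : Matrix (l ⊕ n) m α) =
      fromRows (A₁₁ᵀ * P₁₁ * B) (A₁₂ᵀ * P₁₁ * B + A₂₂ᵀ * P₂₁ * B) := by
  rw [Matrix.mul_assoc]
  simp only [fromBlocks_transpose, transpose_zero, fromBlocks_mul_fromRows, Matrix.zero_mul,
    Matrix.mul_zero, add_zero, Matrix.mul_assoc]

theorem riccatiOperator_fromBlocks [Fintype m] [DecidableEq m] (Q₁₁ : Matrix l l α)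
    (Q₁₂ : Matrix l n α) (Q₂₁ : Matrix n l α) (Q₂₂ : Matrix n n α) (R : Matrix m m α) (β : α) :
    riccatiOperator (fromBlocks Q₁₁ Q₁₂ Q₂₁ Q₂₂) (fromBlocks A₁₁ A₁₂ 0 A₂₂)
        (fromRows B 0 : Matrix (l ⊕ n) m α) R β (fromBlocks P₁₁ P₁₂ P₂₁ P₂₂) =
      fromBlocks (riccatiOperator Q₁₁ A₁₁ B R β P₁₁)
        (Q₁₂ + β • (A₁₁ᵀ * (P₁₁ * A₁₂ + P₁₂ * A₂₂))
          - β ^ 2 • (A₁₁ᵀ * P₁₁ * B * (R + β • (Bᵀ * P₁₁ * B))⁻¹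
            * (Bᵀ * (P₁₁ * A₁₂ + P₁₂ * A₂₂))))
        (Q₂₁ + β • ((A₁₂ᵀ * P₁₁ + A₂₂ᵀ * P₂₁) * A₁₁)
          - β ^ 2 • ((A₁₂ᵀ * P₁₁ * B + A₂₂ᵀ * P₂₁ * B) * (R + β • (Bᵀ * P₁₁ * B))⁻¹
            * (Bᵀ * P₁₁ * A₁₁)))
        (Q₂₂ + β • (A₁₂ᵀ * (P₁₁ * A₁₂ + P₁₂ * A₂₂) + A₂₂ᵀ * (P₂₁ * A₁₂ + P₂₂ * A₂₂))
          - β ^ 2 • ((A₁₂ᵀ * P₁₁ * B + A₂₂ᵀ * P₂₁ * B) * (R + β • (Bᵀ * P₁₁ * B))⁻¹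
            * (Bᵀ * (P₁₁ * A₁₂ + P₁₂ * A₂₂)))) := by
  rw [riccatiOperator, riccatiOperator, fromRows_transpose_mul_fromBlocks_mul_fromRows,
    fromBlocks_transpose_mul_fromBlocks_mul_fromBlocks,
    fromRows_transpose_mul_fromBlocks_mul_fromBlocks,
    fromBlocks_transpose_mul_fromBlocks_mul_fromRows, fromRows_mul, fromRows_mul_fromCols]
  simp only [sub_eq_add_neg, fromBlocks_smul, fromBlocks_neg, fromBlocks_add]

end BlockTriangular

noncomputable def riccatiGain [Fintype m] [DecidableEq m] [Fintype n] (A : Matrix n n α)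
    (B : Matrix n m α) (R : Matrix m m α) (β : α) (P : Matrix n n α) : Matrix m n α :=
  -((R + β • (Bᵀ * P * B))⁻¹ * (β • (Bᵀ * P * A)))

theorem transpose_add_mul_riccatiGain [Fintype m] [DecidableEq m] [Fintype n]
    {P : Matrix n n α} {R : Matrix m m α} (hP : P.IsSymm) (hR : R.IsSymm) (A : Matrix n n α)
    (B : Matrix n m α) (β : α) :
    (A + B * riccatiGain A B R β P)ᵀ = Aᵀ - β • (Aᵀ * P * B * (R + β • (Bᵀ * P * B))⁻¹ * Bᵀ) := by
  simp only [riccatiGain, transpose_add, transpose_mul, transpose_neg, transpose_smul,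
    transpose_nonsing_inv, hR.eq, hP.eq, transpose_transpose, Matrix.mul_neg, Matrix.mul_smul,
    Matrix.mul_assoc, sub_eq_add_neg]

theorem sylvester_riccatiGain [Fintype m] [DecidableEq m] [Fintype n] [Fintype l]
    {P : Matrix n n α} {R : Matrix m m α} (hP : P.IsSymm) (hR : R.IsSymm) (A : Matrix n n α)
    (B : Matrix n m α) (β : α) (Q₁₂ A₁₂ P₁₂ : Matrix n l α) (A₂₂ : Matrix l l α) :
    Q₁₂ + β • ((A + B * riccatiGain A B R β P)ᵀ * P * A₁₂)
        + β • ((A + B * riccatiGain A B R β P)ᵀ * P₁₂ * A₂₂) =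
      Q₁₂ + β • (Aᵀ * (P * A₁₂ + P₁₂ * A₂₂))
        - β ^ 2 • (Aᵀ * P * B * (R + β • (Bᵀ * P * B))⁻¹ * (Bᵀ * (P * A₁₂ + P₁₂ * A₂₂))) := by
  rw [transpose_add_mul_riccatiGain hP hR]
  simp only [Matrix.sub_mul, Matrix.mul_add, Matrix.smul_mul, Matrix.mul_assoc, smul_sub,
    smul_add, smul_smul, pow_two]
  abel

end Matrix

theorem dare_iff_three_block_equations_general
    {ny nz nu : ℕ}
    (Ayy : Matrix (Fin ny) (Fin ny) ℝ) (Ayz : Matrix (Fin ny) (Fin nz) ℝ)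
    (Azz : Matrix (Fin nz) (Fin nz) ℝ) (Byu : Matrix (Fin ny) (Fin nu) ℝ)
    (Qyy : Matrix (Fin ny) (Fin ny) ℝ) (Qyz : Matrix (Fin ny) (Fin nz) ℝ)
    (Qzz : Matrix (Fin nz) (Fin nz) ℝ) (Ruu : Matrix (Fin nu) (Fin nu) ℝ)
    (Pyy : Matrix (Fin ny) (Fin ny) ℝ) (Pyz : Matrix (Fin ny) (Fin nz) ℝ)
    (Pzz : Matrix (Fin nz) (Fin nz) ℝ)
    (β : ℝ)
    (hQyy : Qyy.IsSymm) (hQzz : Qzz.IsSymm) (hRuu : Ruu.IsSymm)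
    (hPyy : Pyy.IsSymm) (hPzz : Pzz.IsSymm)
    (Atil : Matrix (Fin ny ⊕ Fin nz) (Fin ny ⊕ Fin nz) ℝ)
    (hAtil : Atil = fromBlocks Ayy Ayz 0 Azz)
    (Btil : Matrix (Fin ny ⊕ Fin nz) (Fin nu) ℝ)
    (hBtil : Btil = fromRows Byu 0)
    (Qtil : Matrix (Fin ny ⊕ Fin nz) (Fin ny ⊕ Fin nz) ℝ)
    (hQtil : Qtil = fromBlocks Qyy Qyz Qyzᵀ Qzz)
    (P : Matrix (Fin ny ⊕ Fin nz) (Fin ny ⊕ Fin nz) ℝ)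
    (hP : P = fromBlocks Pyy Pyz Pyzᵀ Pzz)
    (Fy : Matrix (Fin nu) (Fin ny) ℝ)
    (hFy : Fy = -((Ruu + β • (Byuᵀ * Pyy * Byu))⁻¹ * (β • (Byuᵀ * Pyy * Ayy)))) :
    (P = Qtil + β • (Atilᵀ * P * Atil)
        - (β ^ 2) • (Atilᵀ * P * Btil * (Ruu + β • (Btilᵀ * P * Btil))⁻¹
            * (Btilᵀ * P * Atil)))
    ↔ (Pyy = Qyy + β • (Ayyᵀ * Pyy * Ayy)
          - (β ^ 2) • (Ayyᵀ * Pyy * Byu * (Ruu + β • (Byuᵀ * Pyy * Byu))⁻¹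
              * (Byuᵀ * Pyy * Ayy))
      ∧ Pyz = Qyz + β • ((Ayy + Byu * Fy)ᵀ * Pyy * Ayz)
          + β • ((Ayy + Byu * Fy)ᵀ * Pyz * Azz)
      ∧ Pzz = Qzz
          + β • (Ayzᵀ * (Pyy * Ayz + Pyz * Azz) + Azzᵀ * (Pyzᵀ * Ayz + Pzz * Azz))
          - (β ^ 2) • ((Ayzᵀ * Pyy * Byu + Azzᵀ * Pyzᵀ * Byu)
              * (Ruu + β • (Byuᵀ * Pyy * Byu))⁻¹
              * (Byuᵀ * (Pyy * Ayz + Pyz * Azz)))) := by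
  change P = riccatiOperator Qtil Atil Btil Ruu β P ↔
    Pyy = riccatiOperator Qyy Ayy Byu Ruu β Pyy ∧ _
  obtain rfl : Fy = riccatiGain Ayy Byu Ruu β Pyy := hFy
  subst hAtil hBtil hQtil hP
  have hQ : (fromBlocks Qyy Qyz Qyzᵀ Qzz).IsSymm := hQyy.fromBlocks rfl hQzz
  have hP : (fromBlocks Pyy Pyz Pyzᵀ Pzz).IsSymm := hPyy.fromBlocks rfl hPzz
  have hRHS := hQ.riccatiOperator hP hRuu (fromBlocks Ayy Ayz 0 Azz) (fromRows Byu 0) β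
  rw [riccatiOperator_fromBlocks] at hRHS ⊢
  rw [fromBlocks_eq_fromBlocks_iff_of_isSymm hP hRHS, sylvester_riccatiGain hPyy hRuu]

/-- With `P = fromBlocks(P_yy, P_yz, P_yzᵀ, P_zz)` symmetric and
`R_uu + β B_yuᵀ P_yy B_yu` invertible, `P` satisfies the discounted algebraic Riccati
equation iff the three block equations (reduced Riccati for `P_yy`, Sylvester for
`P_yz`, and the `P_zz` equation) hold simultaneously. -/
theorem dare_iff_three_block_equations
    {ny nz nu : ℕ}
    (Ayy : Matrix (Fin ny) (Fin ny) ℝ) (Ayz : Matrix (Fin ny) (Fin nz) ℝ)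
    (Azz : Matrix (Fin nz) (Fin nz) ℝ) (Byu : Matrix (Fin ny) (Fin nu) ℝ)
    (Qyy : Matrix (Fin ny) (Fin ny) ℝ) (Qyz : Matrix (Fin ny) (Fin nz) ℝ)
    (Qzz : Matrix (Fin nz) (Fin nz) ℝ) (Ruu : Matrix (Fin nu) (Fin nu) ℝ)
    (Pyy : Matrix (Fin ny) (Fin ny) ℝ) (Pyz : Matrix (Fin ny) (Fin nz) ℝ)
    (Pzz : Matrix (Fin nz) (Fin nz) ℝ)
    (β : ℝ) (hβ : 0 < β)
    (hQyy : Qyy.IsSymm) (hQzz : Qzz.IsSymm) (hRuu : Ruu.IsSymm)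
    (hPyy : Pyy.IsSymm) (hPzz : Pzz.IsSymm)
    (Atil : Matrix (Fin ny ⊕ Fin nz) (Fin ny ⊕ Fin nz) ℝ)
    (hAtil : Atil = fromBlocks Ayy Ayz 0 Azz)
    (Btil : Matrix (Fin ny ⊕ Fin nz) (Fin nu) ℝ)
    (hBtil : Btil = fromRows Byu 0)
    (Qtil : Matrix (Fin ny ⊕ Fin nz) (Fin ny ⊕ Fin nz) ℝ)
    (hQtil : Qtil = fromBlocks Qyy Qyz Qyzᵀ Qzz)
    (P : Matrix (Fin ny ⊕ Fin nz) (Fin ny ⊕ Fin nz) ℝ)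
    (hP : P = fromBlocks Pyy Pyz Pyzᵀ Pzz)
    (hinv : IsUnit (Ruu + β • (Byuᵀ * Pyy * Byu)).det)
    (Fy : Matrix (Fin nu) (Fin ny) ℝ)
    (hFy : Fy = -((Ruu + β • (Byuᵀ * Pyy * Byu))⁻¹ * (β • (Byuᵀ * Pyy * Ayy)))) :
    (P = Qtil + β • (Atilᵀ * P * Atil)
        - (β ^ 2) • (Atilᵀ * P * Btil * (Ruu + β • (Btilᵀ * P * Btil))⁻¹
            * (Btilᵀ * P * Atil)))
    ↔ (Pyy = Qyy + β • (Ayyᵀ * Pyy * Ayy)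
          - (β ^ 2) • (Ayyᵀ * Pyy * Byu * (Ruu + β • (Byuᵀ * Pyy * Byu))⁻¹
              * (Byuᵀ * Pyy * Ayy))
      ∧ Pyz = Qyz + β • ((Ayy + Byu * Fy)ᵀ * Pyy * Ayz)
          + β • ((Ayy + Byu * Fy)ᵀ * Pyz * Azz)
      ∧ Pzz = Qzz
          + β • (Ayzᵀ * (Pyy * Ayz + Pyz * Azz) + Azzᵀ * (Pyzᵀ * Ayz + Pzz * Azz))
          - (β ^ 2) • ((Ayzᵀ * Pyy * Byu + Azzᵀ * Pyzᵀ * Byu)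
              * (Ruu + β • (Byuᵀ * Pyy * Byu))⁻¹
              * (Byuᵀ * (Pyy * Ayz + Pyz * Azz)))) :=
  dare_iff_three_block_equations_general Ayy Ayz Azz Byu Qyy Qyz Qzz Ruu Pyy Pyz Pzz β hQyy hQzz
    hRuu hPyy hPzz Atil hAtil Btil hBtil Qtil hQtil P hP Fy hFy
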